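/- Let Λ be a normal greedoid over a finite alphabet Σ and let ρ be a polymatroid rank function that represents Λ. Then ρ is aligned if and only if the map φ* sending a flat F of Λ to σ_ρ(κ(F)), from the flats of Λ (ordered by ⊑) to the closed sets of ρ (ordered by ⊆), and the map φ_* sending a closed set S of ρ to κ⁻¹(S), are the lower and upper adjoints of a Galois connection in which φ* preserves the covering relation of the flats. -/

import Mathlib

namespace PaperPG

def letters {A : Type*} (w : List A) : Set A := {x | x ∈ w}

/-- A greedoid over alphabet `A`: a nonempty simple hereditary language with exchange. -/
structure Greedoid (A : Type*) where
  lang : Set (List A)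
  lang_nonempty : lang.Nonempty
  simple : ∀ w ∈ lang, w.Nodup
  hereditary : ∀ α β : List A, α ++ β ∈ lang → α ∈ lang
  exchange : ∀ α ∈ lang, ∀ β ∈ lang, β.length < α.length →
      ∃ x ∈ letters α, β ++ [x] ∈ lang

/-- Kernel of a flat: union of the letter sets of its members. -/
def flatKernel {A : Type*} (F : Set (List A)) : Set A := {y : A | ∃ β ∈ F, y ∈ β}

namespace Greedoid

variable {A : Type*} (G : Greedoid A)

/-- `X` is feasible if it is the set of letters of a feasible word. -/
def Feasible (X : Set A) : Prop := ∃ α ∈ G.lang, letters α = X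

/-- The interval property. -/
def IntervalProperty : Prop :=
  ∀ X Y Z : Set A, G.Feasible X → G.Feasible Y → G.Feasible Z →
    X ⊆ Y → Y ⊆ Z → ∀ x : A, x ∉ Z →
      G.Feasible (X ∪ {x}) → G.Feasible (Z ∪ {x}) → G.Feasible (Y ∪ {x})

/-- A loop is a letter occurring in no feasible word. -/
def IsLoop (x : A) : Prop := ∀ α ∈ G.lang, x ∉ α

/-- A greedoid is normal if it has no loops. -/
def Normal : Prop := ∀ x : A, ¬ G.IsLoop x

/-- Greedoid rank: maximum length of a feasible word with letters inside `X`. -/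
noncomputable def rank (X : Set A) : ℕ :=
  sSup {n : ℕ | ∃ α ∈ G.lang, letters α ⊆ X ∧ α.length = n}

/-- Greedoid span. -/
def spanR (X : Set A) : Set A := {y : A | G.rank (X ∪ {y}) = G.rank X}

/-- Kernel of a set. -/
def kernel (X : Set A) : Set A :=
  {y : A | ∃ β ∈ G.lang, letters β ⊆ G.spanR X ∧ y ∈ β}

/-- Continuations of a word. -/
def cont (α : List A) : Set A := {x : A | α ++ [x] ∈ G.lang}

/-- The flat (equivalence class under equal continuations) of a word. -/
def flatOf (α : List A) : Set (List A) := {β ∈ G.lang | G.cont β = G.cont α}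

def IsFlat (F : Set (List A)) : Prop := ∃ α ∈ G.lang, F = G.flatOf α


/-- Order on flats: `[α] ⊑ [β]` iff some `αγ ∈ Λ` with `αγ ∼ β`. -/
def flatLE (F F' : Set (List A)) : Prop :=
  ∃ α ∈ F, ∃ γ : List A, α ++ γ ∈ G.lang ∧ (α ++ γ) ∈ F'

def flatLT (F F' : Set (List A)) : Prop := G.flatLE F F' ∧ F ≠ F'

/-- Covering relation on flats. -/
def flatCovBy (F F' : Set (List A)) : Prop :=
  G.flatLT F F' ∧ ∀ E : Set (List A), G.IsFlat E → G.flatLT F E → G.flatLT E F' → False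

/-- `M` is a meet of the flats `F` and `F'`. -/
def IsMeet (M F F' : Set (List A)) : Prop :=
  G.IsFlat M ∧ G.flatLE M F ∧ G.flatLE M F' ∧
    ∀ E : Set (List A), G.IsFlat E → G.flatLE E F → G.flatLE E F' → G.flatLE E M

/-- A basic word: one of maximum length. -/
def Basic (w : List A) : Prop := w ∈ G.lang ∧ ∀ v ∈ G.lang, v.length ≤ w.length

/-- Optimism: every non-loop is a continuation of some prefix of every basic word. -/
def Optimistic : Prop :=
  ∀ y : A, ¬ G.IsLoop y → ∀ w : List A, G.Basic w →
    ∃ i ≤ w.length, y ∈ G.cont (w.take i)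

/-- The greatest representation `ρ♮`. -/
noncomputable def rhoNat (X : Set A) : ℕ :=
  sInf {n : ℕ | ∃ α ∈ G.lang, X ⊆ G.kernel (letters α) ∧ α.length = n}

end Greedoid

/-- A polymatroid rank function: normalized, monotone, submodular. -/
def IsPolymatroid {A : Type*} (ρ : Set A → ℝ) : Prop :=
  ρ ∅ = 0 ∧ (∀ X Y : Set A, X ⊆ Y → ρ X ≤ ρ Y) ∧
    ∀ X Y : Set A, ρ (X ∪ Y) + ρ (X ∩ Y) ≤ ρ X + ρ Y

/-- `ρ` represents `G`: the language consists exactly of the simple words each of whose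
prefixes of length `i` has rank `i`. -/
def Represents {A : Type*} (ρ : Set A → ℝ) (G : Greedoid A) : Prop :=
  ∀ w : List A, w ∈ G.lang ↔
    (w.Nodup ∧ ∀ i : ℕ, i < w.length → ρ (letters (w.take (i + 1))) = (i + 1 : ℝ))

/-- Polymatroid span. -/
def spanP {A : Type*} (ρ : Set A → ℝ) (X : Set A) : Set A :=
  {y : A | ρ (X ∪ {y}) = ρ X}

/-- Closed sets of a polymatroid. -/
def ClosedP {A : Type*} (ρ : Set A → ℝ) (X : Set A) : Prop := spanP ρ X = X

/-- Covering relation on the closed sets of `ρ`, ordered by inclusion. -/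
def closedCovBy {A : Type*} (ρ : Set A → ℝ) (S S' : Set A) : Prop :=
  ClosedP ρ S ∧ ClosedP ρ S' ∧ S ⊂ S' ∧
    ∀ T : Set A, ClosedP ρ T → S ⊂ T → T ⊂ S' → False

/-- Alignment of a representation. -/
def Aligned {A : Type*} (G : Greedoid A) (ρ : Set A → ℝ) : Prop :=
  ∃ φ : Set (List A) → Set A,
    (∀ F, G.IsFlat F → ClosedP ρ (φ F)) ∧
    (∀ F F', G.IsFlat F → G.IsFlat F' → G.flatLE F F' → φ F ⊆ φ F') ∧
    (∀ α ∈ G.lang, ρ (letters α) = ρ (φ (G.flatOf α))) ∧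
    (∀ α ∈ G.lang, letters α ⊆ φ (G.flatOf α)) ∧
    (∀ F F', G.IsFlat F → G.IsFlat F' → G.flatCovBy F F' → closedCovBy ρ (φ F) (φ F'))

/-- The maps `φ* : F ↦ σ_ρ(κ(F))` and `φ_* : S ↦ κ⁻¹(S)` are well-defined order-preserving
maps between the flats of `G` and the closed sets of `ρ` forming a Galois connection in
which `φ*` preserves the covering relation of the flats. -/
def GaloisPair {A : Type*} (G : Greedoid A) (ρ : Set A → ℝ) : Prop :=
  (∀ F, G.IsFlat F → ClosedP ρ (spanP ρ (flatKernel F))) ∧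
  (∀ F F', G.IsFlat F → G.IsFlat F' → G.flatLE F F' →
      spanP ρ (flatKernel F) ⊆ spanP ρ (flatKernel F')) ∧
  (∀ S, ClosedP ρ S → ∃! F, G.IsFlat F ∧ flatKernel F = G.kernel S) ∧
  (∀ S S', ClosedP ρ S → ClosedP ρ S' → S ⊆ S' →
      ∀ F F', G.IsFlat F → flatKernel F = G.kernel S →
        G.IsFlat F' → flatKernel F' = G.kernel S' → G.flatLE F F') ∧
  (∀ F, G.IsFlat F → ∀ S, ClosedP ρ S → ∀ F', G.IsFlat F' → flatKernel F' = G.kernel S →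
      (spanP ρ (flatKernel F) ⊆ S ↔ G.flatLE F F')) ∧
  (∀ F F', G.IsFlat F → G.IsFlat F' → G.flatCovBy F F' →
      closedCovBy ρ (spanP ρ (flatKernel F)) (spanP ρ (flatKernel F')))


section Aux

variable {A : Type*} [Fintype A] {G : Greedoid A} {ρ : Set A → ℝ}

lemma letters_nil : letters ([] : List A) = ∅ := by ext x; simp [letters]

lemma letters_append (v w : List A) : letters (v ++ w) = letters v ∪ letters w := by
  ext x; simp [letters]

lemma letters_singleton (x : A) : letters [x] = {x} := by ext y; simp [letters]

/-! ### Polymatroid span facts -/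

lemma subset_spanP {X : Set A} : X ⊆ spanP ρ X := by
  intro y hy
  show ρ (X ∪ {y}) = ρ X
  rw [Set.union_eq_self_of_subset_right (Set.singleton_subset_iff.mpr hy)]

lemma spanP_mono (hpm : IsPolymatroid ρ) {X Y : Set A} (hXY : X ⊆ Y) :
    spanP ρ X ⊆ spanP ρ Y := by
  obtain ⟨h0, hmono, hsub⟩ := hpm
  intro y hy
  have hy' : ρ (X ∪ {y}) = ρ X := hy
  show ρ (Y ∪ {y}) = ρ Y
  have h1 := hsub Y (X ∪ {y})
  have h2 : Y ∪ (X ∪ {y}) = Y ∪ {y} := by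
    rw [← Set.union_assoc, Set.union_eq_self_of_subset_right hXY]
  have h3 : ρ X ≤ ρ (Y ∩ (X ∪ {y})) := hmono _ _ (fun a ha => ⟨hXY ha, Or.inl ha⟩)
  have h4 : ρ Y ≤ ρ (Y ∪ {y}) := hmono _ _ Set.subset_union_left
  rw [h2] at h1
  linarith

lemma spanP_step (hpm : IsPolymatroid ρ) {X Y : Set A} {a : A} (hXY : X ⊆ Y)
    (hYX : ρ Y = ρ X) (ha : a ∈ spanP ρ X) : ρ (Y ∪ {a}) = ρ X := by
  obtain ⟨h0, hmono, hsub⟩ := hpm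
  have h1 := hsub Y (X ∪ {a})
  have h2 : Y ∪ (X ∪ {a}) = Y ∪ {a} := by
    rw [← Set.union_assoc, Set.union_eq_self_of_subset_right hXY]
  have h3 : ρ X ≤ ρ (Y ∩ (X ∪ {a})) := hmono _ _ (fun x hx => ⟨hXY hx, Or.inl hx⟩)
  have h4 : ρ Y ≤ ρ (Y ∪ {a}) := hmono _ _ Set.subset_union_left
  have ha' : ρ (X ∪ {a}) = ρ X := ha
  rw [h2] at h1
  linarith

lemma rho_eq_of_subset_spanP (hpm : IsPolymatroid ρ) {X Y : Set A} (hXY : X ⊆ Y)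
    (hY : Y ⊆ spanP ρ X) : ρ Y = ρ X := by
  classical
  have key : ∀ T : Finset A, ↑T ⊆ spanP ρ X → ρ (X ∪ ↑T) = ρ X := by
    intro T
    induction T using Finset.induction_on with
    | empty => intro _; simp
    | @insert a T hanotmem ih =>
      intro hT
      have hstep := spanP_step hpm (X := X) (Y := X ∪ ↑T) Set.subset_union_left
        (ih (fun x hx => hT (by simp only [Finset.coe_insert]; exact Set.mem_insert_of_mem _ hx)))
        (hT (by simp only [Finset.coe_insert]; exact Set.mem_insert _ _))
      have h2 : X ∪ ↑(insert a T) = (X ∪ ↑T) ∪ {a} := by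
        ext x
        simp only [Finset.coe_insert, Set.mem_union, Set.mem_insert_iff, Set.mem_singleton_iff,
          Finset.mem_coe]
        tauto
      rw [h2]; exact hstep
  have hfin : (Y \ X).Finite := Set.toFinite _
  have hT := key hfin.toFinset (by
    rw [Set.Finite.coe_toFinset]
    exact fun x hx => hY hx.1)
  have hXT : X ∪ ↑hfin.toFinset = Y := by
    rw [Set.Finite.coe_toFinset]
    exact Set.union_diff_cancel hXY
  rwa [hXT] at hT

lemma rho_spanP (hpm : IsPolymatroid ρ) (X : Set A) : ρ (spanP ρ X) = ρ X :=
  rho_eq_of_subset_spanP hpm subset_spanP subset_rfl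

lemma closedP_spanP (hpm : IsPolymatroid ρ) (X : Set A) : ClosedP ρ (spanP ρ X) := by
  show spanP ρ (spanP ρ X) = spanP ρ X
  apply Set.Subset.antisymm _ subset_spanP
  intro y hy
  obtain ⟨h0, hmono, hsub⟩ := hpm
  have hy' : ρ (spanP ρ X ∪ {y}) = ρ (spanP ρ X) := hy
  show ρ (X ∪ {y}) = ρ X
  have h1 : ρ (X ∪ {y}) ≤ ρ (spanP ρ X ∪ {y}) :=
    hmono _ _ (Set.union_subset_union_left _ subset_spanP)
  have h2 : ρ X ≤ ρ (X ∪ {y}) := hmono _ _ Set.subset_union_left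
  have h3 : ρ (spanP ρ X) = ρ X := rho_spanP ⟨h0, hmono, hsub⟩ X
  linarith

lemma spanP_eq_of_rho_eq (hpm : IsPolymatroid ρ) {X Y : Set A} (hXY : X ⊆ Y)
    (hr : ρ X = ρ Y) : spanP ρ X = spanP ρ Y := by
  apply Set.Subset.antisymm (spanP_mono hpm hXY)
  intro y hy
  obtain ⟨h0, hmono, hsub⟩ := hpm
  have hy' : ρ (Y ∪ {y}) = ρ Y := hy
  show ρ (X ∪ {y}) = ρ X
  have h1 : ρ (X ∪ {y}) ≤ ρ (Y ∪ {y}) := hmono _ _ (Set.union_subset_union_left _ hXY)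
  have h2 : ρ X ≤ ρ (X ∪ {y}) := hmono _ _ Set.subset_union_left
  linarith

/-! ### Representation facts -/

lemma nil_mem_lang (G : Greedoid A) : [] ∈ G.lang := by
  obtain ⟨α, hα⟩ := G.lang_nonempty
  exact G.hereditary [] α (by simpa using hα)

lemma rho_letters (hpm : IsPolymatroid ρ) (hrep : Represents ρ G) {w : List A}
    (hw : w ∈ G.lang) : ρ (letters w) = w.length := by
  rcases eq_or_ne w [] with rfl | hne
  · simp [letters_nil, hpm.1]
  · have hl : 0 < w.length := List.length_pos_iff.mpr hne
    have h := ((hrep w).mp hw).2 (w.length - 1) (by omega)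
    rw [show w.length - 1 + 1 = w.length from by omega, List.take_length] at h
    rw [h]
    norm_cast
    omega

lemma append_singleton_mem_iff (hrep : Represents ρ G) {w : List A} (hw : w ∈ G.lang) (x : A) :
    w ++ [x] ∈ G.lang ↔ x ∉ letters w ∧ ρ (letters w ∪ {x}) = w.length + 1 := by
  constructor
  · intro h
    obtain ⟨hnd, hρ⟩ := (hrep _).mp h
    rw [List.nodup_append] at hnd
    have hx : x ∉ letters w := fun hxw => hnd.2.2 x hxw x (by simp) rfl
    refine ⟨hx, ?_⟩
    have h2 := hρ w.length (by simp)
    rw [show w.length + 1 = (w ++ [x]).length from by simp, List.take_length,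
      letters_append, letters_singleton] at h2
    exact h2
  · rintro ⟨hx, hρ⟩
    refine (hrep _).mpr ⟨?_, ?_⟩
    · rw [List.nodup_append]
      refine ⟨G.simple w hw, List.nodup_singleton x, ?_⟩
      intro a ha b hb
      rw [List.mem_singleton] at hb
      subst hb
      rintro rfl
      exact hx ha
    · intro i hi
      rw [List.length_append, List.length_singleton] at hi
      rcases lt_or_eq_of_le (Nat.lt_succ_iff.mp hi) with hlt | heq
      · rw [List.take_append_of_le_length (by omega)]
        exact ((hrep w).mp hw).2 i hlt
      · subst heq
        rw [show w.length + 1 = (w ++ [x]).length from by simp, List.take_length,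
          letters_append, letters_singleton]
        exact hρ

lemma not_mem_of_cont {w : List A} {x : A} (hx : x ∈ G.cont w) : x ∉ letters w := by
  have h := G.simple (w ++ [x]) hx
  rw [List.nodup_append] at h
  exact fun hxw => h.2.2 x hxw x (by simp) rfl

/-! ### Greedoid rank facts -/

lemma rank_bddAbove (G : Greedoid A) (X : Set A) :
    BddAbove {n : ℕ | ∃ α ∈ G.lang, letters α ⊆ X ∧ α.length = n} := by
  refine ⟨Fintype.card A, ?_⟩
  rintro n ⟨α, hα, _, rfl⟩
  exact (G.simple α hα).length_le_card

lemma exists_basis (G : Greedoid A) (X : Set A) :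
    ∃ α ∈ G.lang, letters α ⊆ X ∧ α.length = G.rank X := by
  have hne : {n : ℕ | ∃ α ∈ G.lang, letters α ⊆ X ∧ α.length = n}.Nonempty :=
    ⟨0, [], nil_mem_lang G, by simp [letters_nil], rfl⟩
  exact Nat.sSup_mem hne (rank_bddAbove G X)

lemma le_rank {α : List A} {X : Set A} (hα : α ∈ G.lang) (hs : letters α ⊆ X) :
    α.length ≤ G.rank X :=
  le_csSup (rank_bddAbove G X) ⟨α, hα, hs, rfl⟩

lemma rank_mono {X Y : Set A} (h : X ⊆ Y) : G.rank X ≤ G.rank Y := by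
  obtain ⟨α, hα, hs, hl⟩ := exists_basis G X
  rw [← hl]
  exact le_rank hα (hs.trans h)

lemma rank_le_rho (hpm : IsPolymatroid ρ) (hrep : Represents ρ G) (X : Set A) :
    (G.rank X : ℝ) ≤ ρ X := by
  obtain ⟨α, hα, hs, hl⟩ := exists_basis G X
  rw [← hl, ← rho_letters hpm hrep hα]
  exact hpm.2.1 _ _ hs

lemma rank_letters (hpm : IsPolymatroid ρ) (hrep : Represents ρ G) {α : List A}
    (hα : α ∈ G.lang) : G.rank (letters α) = α.length := by
  have h1 : α.length ≤ G.rank (letters α) := le_rank hα subset_rfl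
  have h2 : (G.rank (letters α) : ℝ) ≤ ρ (letters α) := rank_le_rho hpm hrep _
  rw [rho_letters hpm hrep hα] at h2
  have h2' : G.rank (letters α) ≤ α.length := by exact_mod_cast h2
  omega

lemma subset_spanR {X : Set A} : X ⊆ G.spanR X := by
  intro y hy
  show G.rank (X ∪ {y}) = G.rank X
  rw [Set.union_eq_self_of_subset_right (Set.singleton_subset_iff.mpr hy)]

lemma rank_union_of_subset_spanR {X T : Set A} (hT : T ⊆ G.spanR X) :
    G.rank (X ∪ T) = G.rank X := by
  refine le_antisymm ?_ (rank_mono Set.subset_union_left)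
  by_contra hlt
  push_neg at hlt
  obtain ⟨γ, hγ, hγs, hγl⟩ := exists_basis G (X ∪ T)
  obtain ⟨β, hβ, hβs, hβl⟩ := exists_basis G X
  obtain ⟨x, hxγ, hβx⟩ := G.exchange γ hγ β hβ (by omega)
  have hrx : G.rank (X ∪ {x}) = G.rank X := by
    rcases hγs hxγ with hx | hx
    · rw [Set.union_eq_self_of_subset_right (Set.singleton_subset_iff.mpr hx)]
    · exact hT hx
  have h1 : (β ++ [x]).length ≤ G.rank (X ∪ {x}) := le_rank hβx (by
    rw [letters_append, letters_singleton]
    exact Set.union_subset (hβs.trans Set.subset_union_left)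
      (Set.singleton_subset_iff.mpr (Or.inr rfl)))
  simp only [List.length_append, List.length_singleton] at h1
  omega

lemma rank_spanR (G : Greedoid A) (X : Set A) : G.rank (G.spanR X) = G.rank X := by
  have h := rank_union_of_subset_spanR (G := G) (X := X) (T := G.spanR X) subset_rfl
  rwa [Set.union_eq_self_of_subset_left subset_spanR] at h

lemma spanR_eq_of_basis (hpm : IsPolymatroid ρ) (hrep : Represents ρ G) {S : Set A}
    {α : List A} (hα : α ∈ G.lang) (hαS : letters α ⊆ S) (hlen : α.length = G.rank S) :
    G.spanR S = G.spanR (letters α) := by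
  ext y
  constructor
  · intro hy
    have hy' : G.rank (S ∪ {y}) = G.rank S := hy
    show G.rank (letters α ∪ {y}) = G.rank (letters α)
    rw [rank_letters hpm hrep hα]
    refine le_antisymm ?_ (le_rank hα Set.subset_union_left)
    calc G.rank (letters α ∪ {y}) ≤ G.rank (S ∪ {y}) :=
          rank_mono (Set.union_subset_union_left _ hαS)
      _ = G.rank S := hy'
      _ = α.length := hlen.symm
  · intro hy
    have hy' : G.rank (letters α ∪ {y}) = G.rank (letters α) := hy
    show G.rank (S ∪ {y}) = G.rank S
    refine le_antisymm ?_ (rank_mono Set.subset_union_left)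
    by_contra hlt
    push_neg at hlt
    obtain ⟨γ, hγ, hγs, hγl⟩ := exists_basis G (S ∪ {y})
    obtain ⟨x, hxγ, hαx⟩ := G.exchange γ hγ α hα (by omega)
    rcases hγs hxγ with hx | hx
    · have h := le_rank hαx (X := S) (by
        rw [letters_append, letters_singleton]
        exact Set.union_subset hαS (Set.singleton_subset_iff.mpr hx))
      simp only [List.length_append, List.length_singleton] at h
      omega
    · have hxy : x = y := hx
      subst hxy
      have h := le_rank hαx (X := letters α ∪ {x}) (by
        rw [letters_append, letters_singleton])
      rw [hy', rank_letters hpm hrep hα] at h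
      simp only [List.length_append, List.length_singleton] at h
      omega

/-! ### Bases of a span are all equivalent -/

lemma cont_subset_of_bases {S : Set A} {α β : List A}
    (hα : α ∈ G.lang) (hαS : letters α ⊆ G.spanR S) (hαl : α.length = G.rank S)
    (hβ : β ∈ G.lang) (hβS : letters β ⊆ G.spanR S) (hβl : β.length = G.rank S) :
    G.cont α ⊆ G.cont β := by
  intro x hx
  have hαx : α ++ [x] ∈ G.lang := hx
  obtain ⟨w, hwγ, hβw⟩ := G.exchange (α ++ [x]) hαx β hβ (by
    simp only [List.length_append, List.length_singleton]; omega)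
  rw [letters_append, letters_singleton] at hwγ
  rcases hwγ with hw | hw
  · exfalso
    have hsub : letters (β ++ [w]) ⊆ G.spanR S := by
      rw [letters_append, letters_singleton]
      exact Set.union_subset hβS (Set.singleton_subset_iff.mpr (hαS hw))
    have h1 := le_rank hβw hsub
    rw [rank_spanR] at h1
    simp only [List.length_append, List.length_singleton] at h1
    omega
  · have hwx : w = x := hw
    subst hwx
    exact hβw

lemma cont_eq_of_bases {S : Set A} {α β : List A}
    (hα : α ∈ G.lang) (hαS : letters α ⊆ G.spanR S) (hαl : α.length = G.rank S)
    (hβ : β ∈ G.lang) (hβS : letters β ⊆ G.spanR S) (hβl : β.length = G.rank S) :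
    G.cont β = G.cont α :=
  Set.Subset.antisymm (cont_subset_of_bases hβ hβS hβl hα hαS hαl)
    (cont_subset_of_bases hα hαS hαl hβ hβS hβl)

/-! ### Flats -/

lemma mem_flatOf_self {α : List A} (hα : α ∈ G.lang) : α ∈ G.flatOf α := ⟨hα, rfl⟩

lemma flatOf_eq_of_cont_eq {α β : List A} (h : G.cont β = G.cont α) :
    G.flatOf β = G.flatOf α := by
  ext γ
  exact ⟨fun ⟨h1, h2⟩ => ⟨h1, h2.trans h⟩, fun ⟨h1, h2⟩ => ⟨h1, h2.trans h.symm⟩⟩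

lemma length_eq_of_mem_flatOf {α β : List A} (hα : α ∈ G.lang) (hβ : β ∈ G.flatOf α) :
    β.length = α.length := by
  obtain ⟨hβl, hβc⟩ := hβ
  by_contra hne
  rcases Nat.lt_or_ge β.length α.length with h | h
  · obtain ⟨x, hxα, hβx⟩ := G.exchange α hα β hβl h
    have hxβ : x ∈ G.cont β := hβx
    rw [hβc] at hxβ
    exact not_mem_of_cont hxβ hxα
  · have h' : α.length < β.length := by omega
    obtain ⟨x, hxβ', hαx⟩ := G.exchange β hβl α hα h'
    have hxα : x ∈ G.cont α := hαx
    rw [← hβc] at hxα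
    exact not_mem_of_cont hxα hxβ'

lemma letters_subset_flatKernel {α : List A} (hα : α ∈ G.lang) :
    letters α ⊆ flatKernel (G.flatOf α) := fun y hy => ⟨α, mem_flatOf_self hα, hy⟩

lemma letters_subset_spanR_of_mem_flatOf (hpm : IsPolymatroid ρ) (hrep : Represents ρ G)
    {α β : List A} (hα : α ∈ G.lang) (hβ : β ∈ G.flatOf α) :
    letters β ⊆ G.spanR (letters α) := by
  intro z hz
  show G.rank (letters α ∪ {z}) = G.rank (letters α)
  rw [rank_letters hpm hrep hα]
  refine le_antisymm ?_ (le_rank hα Set.subset_union_left)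
  by_contra hlt
  push_neg at hlt
  obtain ⟨γ, hγ, hγs, hγl⟩ := exists_basis G (letters α ∪ {z})
  have hβlen : β.length = α.length := length_eq_of_mem_flatOf hα hβ
  obtain ⟨x, hxγ, hβx⟩ := G.exchange γ hγ β hβ.1 (by omega)
  rcases hγs hxγ with hx | hx
  · have hxc : x ∈ G.cont β := hβx
    rw [hβ.2] at hxc
    exact not_mem_of_cont hxc hx
  · have hxz : x = z := hx
    subst hxz
    exact not_mem_of_cont (show x ∈ G.cont β from hβx) hz

lemma extend_to_basis {X : Set A} :
    ∀ n (α : List A), α ∈ G.lang → letters α ⊆ X → G.rank X = α.length + n →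
      ∃ γ, α ++ γ ∈ G.lang ∧ letters (α ++ γ) ⊆ X ∧ (α ++ γ).length = G.rank X := by
  intro n
  induction n with
  | zero =>
    intro α hα hs hr
    exact ⟨[], by simpa using hα, by simpa using hs, by simp; omega⟩
  | succ n ih =>
    intro α hα hs hr
    obtain ⟨β, hβ, hβs, hβl⟩ := exists_basis G X
    obtain ⟨x, hxβ, hαx⟩ := G.exchange β hβ α hα (by omega)
    have hs' : letters (α ++ [x]) ⊆ X := by
      rw [letters_append, letters_singleton]
      exact Set.union_subset hs (Set.singleton_subset_iff.mpr (hβs hxβ))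
    obtain ⟨γ, h1, h2, h3⟩ := ih (α ++ [x]) hαx hs' (by
      simp only [List.length_append, List.length_singleton]; omega)
    refine ⟨x :: γ, ?_, ?_, ?_⟩
    · rwa [← List.singleton_append, ← List.append_assoc]
    · rwa [← List.singleton_append, ← List.append_assoc]
    · rw [← List.singleton_append, ← List.append_assoc]; exact h3

lemma exists_extension_basis {X : Set A} {α : List A} (hα : α ∈ G.lang)
    (hs : letters α ⊆ X) :
    ∃ γ, α ++ γ ∈ G.lang ∧ letters (α ++ γ) ⊆ X ∧ (α ++ γ).length = G.rank X := by
  obtain ⟨n, hn⟩ := Nat.exists_eq_add_of_le (le_rank hα hs)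
  exact extend_to_basis n α hα hs hn

/-! ### Kernels of flats -/

lemma flatKernel_flatOf (hpm : IsPolymatroid ρ) (hrep : Represents ρ G) {α : List A}
    (hα : α ∈ G.lang) : flatKernel (G.flatOf α) = G.kernel (letters α) := by
  apply Set.Subset.antisymm
  · rintro y ⟨β, hβ, hyβ⟩
    exact ⟨β, hβ.1, letters_subset_spanR_of_mem_flatOf hpm hrep hα hβ, hyβ⟩
  · rintro y ⟨β, hβ, hβs, hyβ⟩
    obtain ⟨γ, h1, h2, h3⟩ := exists_extension_basis (X := G.spanR (letters α)) hβ hβs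
    rw [rank_spanR] at h3
    have hcont : G.cont (β ++ γ) = G.cont α :=
      cont_eq_of_bases (S := letters α) hα subset_spanR (rank_letters hpm hrep hα).symm
        h1 h2 h3
    exact ⟨β ++ γ, ⟨h1, hcont⟩, List.mem_append_left _ hyβ⟩

lemma kernel_subset_spanR (G : Greedoid A) (X : Set A) : G.kernel X ⊆ G.spanR X := by
  rintro y ⟨β, _, hs, hy⟩
  exact hs hy

lemma kernel_eq_of_basis (hpm : IsPolymatroid ρ) (hrep : Represents ρ G) {S : Set A}
    {α : List A} (hα : α ∈ G.lang) (hαS : letters α ⊆ S) (hlen : α.length = G.rank S) :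
    G.kernel S = G.kernel (letters α) := by
  unfold Greedoid.kernel
  rw [spanR_eq_of_basis hpm hrep hα hαS hlen]

lemma flatOf_eq_of_flatKernel_eq (hpm : IsPolymatroid ρ) (hrep : Represents ρ G)
    {α β : List A} (hα : α ∈ G.lang) (hβ : β ∈ G.lang)
    (h : flatKernel (G.flatOf α) = flatKernel (G.flatOf β)) : G.flatOf β = G.flatOf α := by
  have hαK : letters α ⊆ flatKernel (G.flatOf α) := letters_subset_flatKernel hα
  have hβK : letters β ⊆ flatKernel (G.flatOf α) := by
    rw [h]; exact letters_subset_flatKernel hβ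
  have hKα : flatKernel (G.flatOf α) ⊆ G.spanR (letters α) := by
    rw [flatKernel_flatOf hpm hrep hα]; exact kernel_subset_spanR G _
  have hKβ : flatKernel (G.flatOf α) ⊆ G.spanR (letters β) := by
    rw [h, flatKernel_flatOf hpm hrep hβ]; exact kernel_subset_spanR G _
  have h1 : β.length ≤ G.rank (G.spanR (letters α)) := le_rank hβ (hβK.trans hKα)
  rw [rank_spanR, rank_letters hpm hrep hα] at h1
  have h2 : α.length ≤ G.rank (G.spanR (letters β)) := le_rank hα (hαK.trans hKβ)
  rw [rank_spanR, rank_letters hpm hrep hβ] at h2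
  apply flatOf_eq_of_cont_eq
  exact cont_eq_of_bases (S := letters α) hα subset_spanR (rank_letters hpm hrep hα).symm
    hβ (hβK.trans hKα) (by rw [rank_letters hpm hrep hα]; omega)

lemma isFlat_eq_of_kernel_eq (hpm : IsPolymatroid ρ) (hrep : Represents ρ G)
    {F F' : Set (List A)} (hF : G.IsFlat F) (hF' : G.IsFlat F')
    (h : flatKernel F = flatKernel F') : F = F' := by
  obtain ⟨α, hα, rfl⟩ := hF
  obtain ⟨β, hβ, rfl⟩ := hF'
  exact (flatOf_eq_of_flatKernel_eq hpm hrep hα hβ h).symm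

lemma flatLE_refl {α : List A} (hα : α ∈ G.lang) :
    G.flatLE (G.flatOf α) (G.flatOf α) :=
  ⟨α, mem_flatOf_self hα, [], by simpa using hα, by simpa using mem_flatOf_self hα⟩

/-! ### The forced form of an alignment map -/

lemma forced_phi (hpm : IsPolymatroid ρ) (hrep : Represents ρ G) {φ : Set (List A) → Set A}
    (hcl : ∀ F, G.IsFlat F → ClosedP ρ (φ F))
    (hρeq : ∀ α ∈ G.lang, ρ (letters α) = ρ (φ (G.flatOf α)))
    (hsubφ : ∀ α ∈ G.lang, letters α ⊆ φ (G.flatOf α))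
    {α : List A} (hα : α ∈ G.lang) :
    φ (G.flatOf α) = spanP ρ (flatKernel (G.flatOf α)) ∧
      ρ (flatKernel (G.flatOf α)) = α.length := by
  obtain ⟨h0, hmono, hsub⟩ := id hpm
  have hκφ : flatKernel (G.flatOf α) ⊆ φ (G.flatOf α) := by
    rintro y ⟨β, hβ, hyβ⟩
    have heq : φ (G.flatOf β) = φ (G.flatOf α) := by rw [flatOf_eq_of_cont_eq hβ.2]
    exact heq ▸ hsubφ β hβ.1 hyβ
  have hρφ : ρ (φ (G.flatOf α)) = α.length := by
    rw [← hρeq α hα]; exact rho_letters hpm hrep hα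
  have hρκ : ρ (flatKernel (G.flatOf α)) = α.length := by
    have hl : ρ (letters α) ≤ ρ (flatKernel (G.flatOf α)) :=
      hmono _ _ (letters_subset_flatKernel hα)
    have hu : ρ (flatKernel (G.flatOf α)) ≤ ρ (φ (G.flatOf α)) := hmono _ _ hκφ
    rw [rho_letters hpm hrep hα] at hl
    rw [hρφ] at hu
    linarith
  refine ⟨?_, hρκ⟩
  apply Set.Subset.antisymm
  · intro y hy
    show ρ (flatKernel (G.flatOf α) ∪ {y}) = ρ (flatKernel (G.flatOf α))
    have h1 : ρ (flatKernel (G.flatOf α) ∪ {y}) ≤ ρ (φ (G.flatOf α)) :=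
      hmono _ _ (Set.union_subset hκφ (Set.singleton_subset_iff.mpr hy))
    have h2 : ρ (flatKernel (G.flatOf α)) ≤ ρ (flatKernel (G.flatOf α) ∪ {y}) :=
      hmono _ _ Set.subset_union_left
    linarith
  · intro y hy
    have hy' : ρ (flatKernel (G.flatOf α) ∪ {y}) = ρ (flatKernel (G.flatOf α)) := hy
    have hcl' : ClosedP ρ (φ (G.flatOf α)) := hcl _ ⟨α, hα, rfl⟩
    rw [← hcl']
    show ρ (φ (G.flatOf α) ∪ {y}) = ρ (φ (G.flatOf α))
    have h1 := hsub (φ (G.flatOf α)) (flatKernel (G.flatOf α) ∪ {y})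
    have h2 : φ (G.flatOf α) ∪ (flatKernel (G.flatOf α) ∪ {y}) = φ (G.flatOf α) ∪ {y} := by
      rw [← Set.union_assoc, Set.union_eq_self_of_subset_right hκφ]
    have h3 : ρ (flatKernel (G.flatOf α)) ≤
        ρ (φ (G.flatOf α) ∩ (flatKernel (G.flatOf α) ∪ {y})) :=
      hmono _ _ (fun z hz => ⟨hκφ hz, Or.inl hz⟩)
    have h4 : ρ (φ (G.flatOf α)) ≤ ρ (φ (G.flatOf α) ∪ {y}) := hmono _ _ Set.subset_union_left
    rw [h2] at h1
    linarith

end Aux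

/-- A representation is aligned iff `φ* = σ_ρ ∘ κ` and `φ_* = κ⁻¹` are the adjoints of
a Galois connection between the flats and the closed sets in which `φ*` preserves the
covering relation of the flats. -/
theorem aligned_iff_galois {A : Type*} [Fintype A] (G : Greedoid A)
    (hnorm : G.Normal) (ρ : Set A → ℝ)
    (hpm : IsPolymatroid ρ) (hrep : Represents ρ G) :
    Aligned G ρ ↔ GaloisPair G ρ := by
  obtain ⟨h0, hmono, hsub⟩ := id hpm
  constructor
  · rintro ⟨φ, hcl, hmono', hρeq, hsubφ, hcov⟩
    have hforce := fun (α : List A) (hα : α ∈ G.lang) => forced_phi hpm hrep hcl hρeq hsubφ hα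
    refine ⟨fun F _ => closedP_spanP hpm _, ?_, ?_, ?_, ?_, ?_⟩
    · -- order preservation of φ*
      rintro F F' ⟨a, ha, rfl⟩ ⟨b, hb, rfl⟩ hle
      rw [← (hforce a ha).1, ← (hforce b hb).1]
      exact hmono' _ _ ⟨a, ha, rfl⟩ ⟨b, hb, rfl⟩ hle
    · -- existence and uniqueness of κ⁻¹
      intro S hS
      obtain ⟨a, ha, haS, hal⟩ := exists_basis G S
      refine ⟨G.flatOf a, ⟨⟨a, ha, rfl⟩, ?_⟩, ?_⟩
      · rw [flatKernel_flatOf hpm hrep ha]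
        exact (kernel_eq_of_basis hpm hrep ha haS hal).symm
      · rintro F' ⟨hF', hk⟩
        refine isFlat_eq_of_kernel_eq hpm hrep hF' ⟨a, ha, rfl⟩ ?_
        rw [hk, flatKernel_flatOf hpm hrep ha]
        exact kernel_eq_of_basis hpm hrep ha haS hal
    · -- monotonicity of κ⁻¹
      intro S S' _ _ hss F F' hF hkF hF' hkF'
      obtain ⟨a, ha, haS, hal⟩ := exists_basis G S
      obtain ⟨b, hb, hbS, hbl⟩ := exists_basis G S'
      have hFa : F = G.flatOf a := isFlat_eq_of_kernel_eq hpm hrep hF ⟨a, ha, rfl⟩ (by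
        rw [hkF, flatKernel_flatOf hpm hrep ha]
        exact kernel_eq_of_basis hpm hrep ha haS hal)
      have hFb : F' = G.flatOf b := isFlat_eq_of_kernel_eq hpm hrep hF' ⟨b, hb, rfl⟩ (by
        rw [hkF', flatKernel_flatOf hpm hrep hb]
        exact kernel_eq_of_basis hpm hrep hb hbS hbl)
      subst hFa; subst hFb
      obtain ⟨γ, h1, h2, h3⟩ := exists_extension_basis (X := S') ha (haS.trans hss)
      have hcont : G.cont (a ++ γ) = G.cont b :=
        cont_eq_of_bases (S := S') hb (hbS.trans subset_spanR) hbl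
          h1 (h2.trans subset_spanR) h3
      exact ⟨a, mem_flatOf_self ha, γ, h1, ⟨h1, hcont⟩⟩
    · -- the Galois connection
      rintro F ⟨a, ha, rfl⟩ S hS F' hF' hk
      obtain ⟨b, hb, hbS, hbl⟩ := exists_basis G S
      have hFb : F' = G.flatOf b := isFlat_eq_of_kernel_eq hpm hrep hF' ⟨b, hb, rfl⟩ (by
        rw [hk, flatKernel_flatOf hpm hrep hb]
        exact kernel_eq_of_basis hpm hrep hb hbS hbl)
      subst hFb
      constructor
      · intro hsubS
        have h1 : letters a ⊆ S := (letters_subset_flatKernel ha).trans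
          ((subset_spanP (ρ := ρ)).trans hsubS)
        obtain ⟨γ, hg1, hg2, hg3⟩ := exists_extension_basis (X := S) ha h1
        have hcont : G.cont (a ++ γ) = G.cont b :=
          cont_eq_of_bases (S := S) hb (hbS.trans subset_spanR) hbl
            hg1 (hg2.trans subset_spanR) hg3
        exact ⟨a, mem_flatOf_self ha, γ, hg1, ⟨hg1, hcont⟩⟩
      · intro hle
        calc spanP ρ (flatKernel (G.flatOf a)) = φ (G.flatOf a) := (hforce a ha).1.symm
          _ ⊆ φ (G.flatOf b) := hmono' _ _ ⟨a, ha, rfl⟩ ⟨b, hb, rfl⟩ hle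
          _ = spanP ρ (flatKernel (G.flatOf b)) := (hforce b hb).1
          _ = spanP ρ (letters b) := (spanP_eq_of_rho_eq hpm (letters_subset_flatKernel hb)
              (by rw [rho_letters hpm hrep hb, (hforce b hb).2])).symm
          _ ⊆ spanP ρ S := spanP_mono hpm hbS
          _ = S := hS
    · -- covering preservation
      rintro F F' ⟨a, ha, rfl⟩ ⟨b, hb, rfl⟩ hcovF
      have h := hcov _ _ ⟨a, ha, rfl⟩ ⟨b, hb, rfl⟩ hcovF
      rwa [(hforce a ha).1, (hforce b hb).1] at h
  · rintro ⟨g1, g2, g3, g4, g5, g6⟩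
    refine ⟨fun F => spanP ρ (flatKernel F), g1, g2, ?_, ?_, g6⟩
    · intro a ha
      show ρ (letters a) = ρ (spanP ρ (flatKernel (G.flatOf a)))
      rw [rho_spanP hpm]
      have hκ1 : ρ (letters a) ≤ ρ (flatKernel (G.flatOf a)) :=
        hmono _ _ (letters_subset_flatKernel ha)
      have hcS : ClosedP ρ (spanP ρ (letters a)) := closedP_spanP hpm _
      have haS : letters a ⊆ spanP ρ (letters a) := subset_spanP
      have hrS : a.length = G.rank (spanP ρ (letters a)) := by
        refine le_antisymm (le_rank ha haS) ?_
        have h := rank_le_rho hpm hrep (G := G) (spanP ρ (letters a))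
        rw [rho_spanP hpm, rho_letters hpm hrep ha] at h
        exact_mod_cast h
      have hker : flatKernel (G.flatOf a) = G.kernel (spanP ρ (letters a)) := by
        rw [flatKernel_flatOf hpm hrep ha]
        exact (kernel_eq_of_basis hpm hrep ha haS hrS).symm
      have h5 := (g5 (G.flatOf a) ⟨a, ha, rfl⟩ (spanP ρ (letters a)) hcS
        (G.flatOf a) ⟨a, ha, rfl⟩ hker).mpr (flatLE_refl ha)
      have hκ2 : ρ (flatKernel (G.flatOf a)) ≤ ρ (spanP ρ (letters a)) :=
        hmono _ _ ((subset_spanP (ρ := ρ)).trans h5)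
      rw [rho_spanP hpm] at hκ2
      linarith
    · intro a ha
      exact (letters_subset_flatKernel ha).trans subset_spanP


end PaperPG
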